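/- (Theorem 2, plug-in converse part.) There exist constants c > 0, ε₀ > 0, and S₀ such that for all S ≥ S₀ and all n ≤ c · S², the empirical (plug-in) mutual information satisfies sup over all joint pmfs P on [S]×[S] of E_{Z^n ~ P^{⊗n}}[(I(P̂_n) − I(P))²] ≥ ε₀. That is, the worst-case sample complexity required for the empirical mutual information to be consistent is Ω(S²). -/

import Mathlib

/-- Shannon entropy of a pmf `P` on a finite alphabet, with natural logarithm and the
convention `0 ln 0 = 0`. -/
noncomputable def entropy {A : Type*} [Fintype A] (P : A → ℝ) : ℝ :=
  ∑ a, -(P a * Real.log (P a))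

/-- Mutual information of a joint pmf `P` on `A × B`: `I(P) = H(P1) + H(P2) − H(P)`. -/
noncomputable def mutualInfo {A B : Type*} [Fintype A] [Fintype B] (P : A × B → ℝ) : ℝ :=
  entropy (fun a => ∑ b, P (a, b)) + entropy (fun b => ∑ a, P (a, b)) - entropy P

/-- Expectation of `f(Z^n)` when `Z^n = (Z_1,…,Z_n)` is drawn i.i.d. from the pmf `P`. -/
noncomputable def expectIID {A : Type*} [Fintype A] {n : ℕ} (P : A → ℝ)
    (f : (Fin n → A) → ℝ) : ℝ :=
  ∑ z : Fin n → A, (∏ k, P (z k)) * f z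

/-- `P` is a probability mass function on the finite alphabet `A`. -/
def IsPmf {A : Type*} [Fintype A] (P : A → ℝ) : Prop :=
  (∀ a, 0 ≤ P a) ∧ ∑ a, P a = 1

/-- Empirical distribution of the sample `z = (z_1,…,z_n)`:
`P̂_n(a) = (1/n) Σ_{k=1}^n 1{z_k = a}`. -/
noncomputable def empDist {A : Type*} [Fintype A] [DecidableEq A] {n : ℕ}
    (z : Fin n → A) : A → ℝ :=
  fun a => (∑ k, if z k = a then (1 : ℝ) else 0) / n

/-!
If `n ≤ S / 10`, take `P` uniform on the diagonal, so `I(P) = log S`. The atoms of an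
empirical distribution of `n` samples have mass at least `1 / n`, so its entropy is at most
`log n`; as a marginal has no more entropy than the joint law, `I(P̂ₙ) ≤ H(P̂ₙ,₁) ≤ log n`,
and the error is at least `log 10 > 1` for every sample.

If `S / 10 < n ≤ S² / 100`, take `P` uniform on `[S] × [S]`, so `I(P) = 0`. From
`-log x ≥ 1 - x`, every pmf `q` has `H(q) ≥ log t + 1 - t ∑ q²` for `t > 0`; applied with
`t = √n` to both marginals of `P̂ₙ`, together with `H(P̂ₙ) ≤ log n`, this gives
`I(P̂ₙ) ≥ 2 - √n (∑ P̂ₙ,₁² + ∑ P̂ₙ,₂²)`. Each marginal collision probability has mean at most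
`1 / n + 1 / S`, hence `E I(P̂ₙ) ≥ 2 - 2 / √n - 2 √n / S ≥ 8 / 5`, and
`E I(P̂ₙ)² ≥ 2 E I(P̂ₙ) - 1 > 1`.
-/

open Finset Real

noncomputable def collision {A : Type*} [Fintype A] (q : A → ℝ) : ℝ :=
  ∑ a, q a ^ 2

section Pmf

variable {A B : Type*} [Fintype A] [Fintype B]

lemma IsPmf.le_one {q : A → ℝ} (hq : IsPmf q) (a : A) : q a ≤ 1 :=
  hq.2 ▸ single_le_sum (fun b _ => hq.1 b) (mem_univ a)

lemma IsPmf.fst {Q : A × B → ℝ} (hQ : IsPmf Q) : IsPmf fun a => ∑ b, Q (a, b) :=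
  ⟨fun _ => sum_nonneg fun _ _ => hQ.1 _, by rw [← Fintype.sum_prod_type', hQ.2]⟩

lemma IsPmf.snd {Q : A × B → ℝ} (hQ : IsPmf Q) : IsPmf fun b => ∑ a, Q (a, b) :=
  ⟨fun _ => sum_nonneg fun _ _ => hQ.1 _, by rw [← Fintype.sum_prod_type_right', hQ.2]⟩

lemma sum_filter_fst_eq [DecidableEq A] (Q : A × B → ℝ) (a : A) :
    ∑ p with p.1 = a, Q p = ∑ b, Q (a, b) := by
  simp [sum_filter, Fintype.sum_prod_type_right]

lemma sum_filter_snd_eq [DecidableEq B] (Q : A × B → ℝ) (b : B) :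
    ∑ p with p.2 = b, Q p = ∑ a, Q (a, b) := by
  simp [sum_filter, Fintype.sum_prod_type]

lemma isPmf_map [DecidableEq B] {P : A → ℝ} (hP : IsPmf P) (v : A → B) :
    IsPmf fun b => ∑ a with v a = b, P a :=
  ⟨fun _ => sum_nonneg fun a _ => hP.1 a, by rw [sum_fiberwise, hP.2]⟩

lemma entropy_nonneg {q : A → ℝ} (hq : IsPmf q) : 0 ≤ entropy q :=
  sum_nonneg fun a _ => neg_nonneg.2 (mul_log_nonpos (hq.1 a) (hq.le_one a))

lemma entropy_le_card {q : A → ℝ} (hq : ∀ a, 0 ≤ q a) : entropy q ≤ Fintype.card A := by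
  calc entropy q ≤ ∑ _a : A, (1 : ℝ) :=
        sum_le_sum fun a _ => by linarith [self_sub_one_le_mul_log (hq a), hq a]
    _ = Fintype.card A := by simp

lemma abs_mutualInfo_le {Q : A × B → ℝ} (hQ : IsPmf Q) :
    |mutualInfo Q| ≤ Fintype.card A + Fintype.card B + Fintype.card (A × B) := by
  have := entropy_le_card hQ.fst.1
  have := entropy_le_card hQ.snd.1
  have := entropy_le_card hQ.1
  have := entropy_nonneg hQ.fst
  have := entropy_nonneg hQ.snd
  have := entropy_nonneg hQ
  rw [abs_le, mutualInfo]
  constructor <;> linarith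

lemma entropy_snd_le {Q : A × B → ℝ} (hQ : ∀ p, 0 ≤ Q p) :
    entropy (fun b => ∑ a, Q (a, b)) ≤ entropy Q := by
  rw [entropy, entropy, Fintype.sum_prod_type_right]
  refine sum_le_sum fun b _ => ?_
  rw [sum_mul, ← sum_neg_distrib]
  refine sum_le_sum fun a _ => neg_le_neg ?_
  rcases (hQ (a, b)).eq_or_lt with h | h
  · simp [← h]
  · exact mul_le_mul_of_nonneg_left (log_le_log h
      (single_le_sum (f := fun a => Q (a, b)) (fun _ _ => hQ _) (mem_univ a))) h.le

lemma log_add_one_sub_mul_collision_le_entropy {q : A → ℝ} (hq : IsPmf q) {t : ℝ} (ht : 0 < t) :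
    log t + 1 - t * collision q ≤ entropy q := by
  have key : ∀ a, q a * (log t + 1) - t * q a ^ 2 ≤ -(q a * log (q a)) := by
    intro a
    rcases (hq.1 a).eq_or_lt with h | h
    · simp [← h]
    · have := log_le_sub_one_of_pos (mul_pos ht h)
      rw [log_mul ht.ne' h.ne'] at this
      nlinarith [mul_le_mul_of_nonneg_left this h.le]
  calc log t + 1 - t * collision q = ∑ a, (q a * (log t + 1) - t * q a ^ 2) := by
        rw [sum_sub_distrib, ← sum_mul, hq.2, collision, mul_sum, one_mul]
    _ ≤ entropy q := sum_le_sum fun a _ => key a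

lemma le_mutualInfo {Q : A × B → ℝ} (hQ : IsPmf Q) {t : ℝ} (ht : 0 < t) :
    2 * log t + 2 - t * (collision (fun a => ∑ b, Q (a, b)) + collision fun b => ∑ a, Q (a, b))
      - entropy Q ≤ mutualInfo Q := by
  have h₁ := log_add_one_sub_mul_collision_le_entropy hQ.fst ht
  have h₂ := log_add_one_sub_mul_collision_le_entropy hQ.snd ht
  rw [mutualInfo]
  linarith

end Pmf

section Expectation

variable {A B : Type*} [Fintype A] [Fintype B] {n : ℕ} {P : A → ℝ}

lemma expectIID_mono (hP : ∀ a, 0 ≤ P a) {f g : (Fin n → A) → ℝ} (h : ∀ z, f z ≤ g z) :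
    expectIID P f ≤ expectIID P g :=
  sum_le_sum fun z _ => mul_le_mul_of_nonneg_left (h z) (prod_nonneg fun k _ => hP (z k))

lemma expectIID_const (hP : ∑ a, P a = 1) (c : ℝ) : expectIID P (fun _ : Fin n → A => c) = c := by
  rw [expectIID, ← sum_mul, ← Fintype.sum_pow, hP, one_pow, one_mul]

lemma le_expectIID_of_forall_le (hP : IsPmf P) {f : (Fin n → A) → ℝ} {c : ℝ}
    (h : ∀ z, c ≤ f z) : c ≤ expectIID P f :=
  expectIID_const hP.2 c ▸ expectIID_mono hP.1 h

lemma expectIID_le_of_forall_le (hP : IsPmf P) {f : (Fin n → A) → ℝ} {c : ℝ}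
    (h : ∀ z, f z ≤ c) : expectIID P f ≤ c :=
  expectIID_const hP.2 c ▸ expectIID_mono hP.1 h

lemma expectIID_add (f g : (Fin n → A) → ℝ) :
    expectIID P (fun z => f z + g z) = expectIID P f + expectIID P g := by
  simp only [expectIID, mul_add, sum_add_distrib]

lemma expectIID_const_mul (c : ℝ) (f : (Fin n → A) → ℝ) :
    expectIID P (fun z => c * f z) = c * expectIID P f := by
  simp only [expectIID, mul_sum, mul_left_comm]

lemma expectIID_sum {ι : Type*} (s : Finset ι) (f : ι → (Fin n → A) → ℝ) :
    expectIID P (fun z => ∑ i ∈ s, f i z) = ∑ i ∈ s, expectIID P (f i) := by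
  simp only [expectIID, mul_sum]
  exact sum_comm

lemma expectIID_prod (w : Fin n → A → ℝ) :
    expectIID P (fun z => ∏ k, w k (z k)) = ∏ k, ∑ a, P a * w k a := by
  simp only [expectIID, ← prod_mul_distrib]
  exact (Fintype.prod_sum fun k a => P a * w k a).symm

lemma expectIID_mul_of_ne (hP : ∑ a, P a = 1) {k l : Fin n} (hkl : k ≠ l) (g h : A → ℝ) :
    expectIID P (fun z => g (z k) * h (z l)) = (∑ a, P a * g a) * ∑ a, P a * h a := by
  let w : Fin n → A → ℝ := fun j => if j = k then g else if j = l then h else 1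
  have hw : ∀ z : Fin n → A, g (z k) * h (z l) = ∏ j, w j (z j) := fun z => by
    rw [prod_eq_mul k l hkl (fun j _ hj => by simp [w, hj.1, hj.2]) (by simp) (by simp)]
    simp [w, hkl.symm]
  simp_rw [hw]
  rw [expectIID_prod, prod_eq_mul k l hkl (fun j _ hj => by simp [w, hj.1, hj.2, hP])
    (by simp) (by simp)]
  simp [w, hkl.symm]

lemma expectIID_comp [DecidableEq B] (v : A → B) (f : (Fin n → B) → ℝ) :
    expectIID P (fun z => f (v ∘ z)) = expectIID (fun b => ∑ a with v a = b, P a) f := by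
  unfold expectIID
  rw [← sum_fiberwise univ (fun z => v ∘ z)]
  refine sum_congr rfl fun w _ => ?_
  rw [prod_univ_sum, sum_mul]
  refine sum_congr ?_ fun z hz => ?_
  · ext z
    simp [funext_iff]
  · simp only [Fintype.mem_piFinset, mem_filter, mem_univ, true_and] at hz
    simp only [show v ∘ z = w from funext hz]

lemma two_mul_expectIID_sub_one_le (hP : IsPmf P) (f : (Fin n → A) → ℝ) :
    2 * expectIID P f - 1 ≤ expectIID P (fun z => f z ^ 2) := by
  have := expectIID_mono hP.1 (f := fun z => 2 * f z + -1) (g := fun z => f z ^ 2)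
    fun z => by nlinarith [sq_nonneg (f z - 1)]
  rwa [expectIID_add, expectIID_const_mul, expectIID_const hP.2, ← sub_eq_add_neg] at this

end Expectation

section Empirical

variable {A B : Type*} [Fintype A] [Fintype B] [DecidableEq A] [DecidableEq B] {n : ℕ}

lemma empDist_eq_card (z : Fin n → A) (a : A) : empDist z a = #{k | z k = a} / n := by
  unfold empDist
  rw [sum_boole]

lemma isPmf_empDist (hn : n ≠ 0) (z : Fin n → A) : IsPmf (empDist z) := by
  refine ⟨fun a => by rw [empDist_eq_card]; positivity, ?_⟩
  unfold empDist
  rw [← sum_div, sum_comm]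
  simp [hn]

lemma entropy_empDist_le_log (hn : n ≠ 0) (z : Fin n → A) : entropy (empDist z) ≤ log n := by
  have key : ∀ a, -(empDist z a * log (empDist z a)) ≤ empDist z a * log n := by
    intro a
    rw [empDist_eq_card]
    rcases Nat.eq_zero_or_pos #{k | z k = a} with h | h
    · simp [h]
    · have hm : (1 : ℝ) ≤ #{k | z k = a} := by exact_mod_cast h
      rw [log_div (by positivity) (by positivity)]
      nlinarith [log_nonneg hm, div_nonneg (zero_le_one.trans hm) (Nat.cast_nonneg n)]
  calc entropy (empDist z) ≤ ∑ a, empDist z a * log n := sum_le_sum fun a _ => key a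
    _ = log n := by rw [← sum_mul, (isPmf_empDist hn z).2, one_mul]

lemma sum_empDist_fst (z : Fin n → A × B) (a : A) :
    ∑ b, empDist z (a, b) = empDist (Prod.fst ∘ z) a := by
  simp only [empDist, ← sum_div, Function.comp]
  rw [sum_comm]
  congr 1
  refine sum_congr rfl fun k _ => ?_
  by_cases h : (z k).1 = a <;> simp [Prod.ext_iff, h]

lemma sum_empDist_snd (z : Fin n → A × B) (b : B) :
    ∑ a, empDist z (a, b) = empDist (Prod.snd ∘ z) b := by
  simp only [empDist, ← sum_div, Function.comp]
  rw [sum_comm]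
  congr 1
  refine sum_congr rfl fun k _ => ?_
  by_cases h : (z k).2 = b <;> simp [Prod.ext_iff, h]

lemma mutualInfo_empDist_le_log (hn : n ≠ 0) (z : Fin n → A × B) :
    mutualInfo (empDist z) ≤ log n := by
  have h₁ := entropy_empDist_le_log hn (Prod.fst ∘ z)
  have h₂ := entropy_snd_le (isPmf_empDist hn z).1
  rw [mutualInfo]
  simp only [sum_empDist_fst] at h₂ ⊢
  linarith

lemma two_sub_le_mutualInfo_empDist (hn : n ≠ 0) (z : Fin n → A × B) :
    2 - √n * (collision (empDist (Prod.fst ∘ z)) + collision (empDist (Prod.snd ∘ z)))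
      ≤ mutualInfo (empDist z) := by
  have hsqrt : 0 < √n := Real.sqrt_pos.2 (by positivity)
  have h := le_mutualInfo (isPmf_empDist hn z) hsqrt
  have hlog : log √n = log n / 2 := log_sqrt (Nat.cast_nonneg n)
  simp only [sum_empDist_fst, sum_empDist_snd] at h
  linarith [entropy_empDist_le_log hn z]

lemma collision_empDist (z : Fin n → A) :
    collision (empDist z) = ((n : ℝ) ^ 2)⁻¹ * ∑ k, ∑ l, if z k = z l then 1 else 0 := by
  have h : ∀ a, empDist z a ^ 2
      = ((n : ℝ) ^ 2)⁻¹ * ∑ k, ∑ l, (if z k = a then 1 else 0) * (if z l = a then 1 else 0) :=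
    fun a => by rw [empDist, div_pow, sq (∑ k, _), sum_mul_sum, div_eq_inv_mul]
  rw [collision, sum_congr rfl fun a _ => h a, ← mul_sum]
  congr 1
  rw [sum_comm]
  refine sum_congr rfl fun k _ => ?_
  rw [sum_comm]
  refine sum_congr rfl fun l _ => ?_
  simp [eq_comm]

lemma expectIID_collision_empDist_le {P : A → ℝ} (hP : IsPmf P) (hn : n ≠ 0) :
    expectIID P (fun z : Fin n → A => collision (empDist z)) ≤ 1 / n + collision P := by
  have hpair : ∀ k l : Fin n, expectIID P (fun z => if z k = z l then 1 else 0)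
      ≤ (if k = l then 1 else 0) + collision P := by
    intro k l
    by_cases hkl : k = l
    · subst hkl
      simpa [expectIID_const hP.2, collision] using sum_nonneg fun a _ => sq_nonneg (P a)
    · have h : ∀ z : Fin n → A, (if z k = z l then (1 : ℝ) else 0)
          = ∑ a, (if z k = a then 1 else 0) * (if z l = a then 1 else 0) := fun z => by
        simp [eq_comm]
      simp_rw [h]
      rw [expectIID_sum]
      refine (sum_congr rfl fun a _ => expectIID_mul_of_ne hP.2 hkl
        (fun b => if b = a then (1 : ℝ) else 0) (fun b => if b = a then (1 : ℝ) else 0)).trans_le ?_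
      simp [hkl, collision, sq]
  simp_rw [collision_empDist]
  rw [expectIID_const_mul, expectIID_sum]
  simp_rw [expectIID_sum]
  calc ((n : ℝ) ^ 2)⁻¹ * ∑ k, ∑ l, expectIID P (fun z => if z k = z l then 1 else 0)
      ≤ ((n : ℝ) ^ 2)⁻¹ * ∑ k : Fin n, ∑ l : Fin n, ((if k = l then 1 else 0) + collision P) :=
        mul_le_mul_of_nonneg_left (sum_le_sum fun k _ => sum_le_sum fun l _ => hpair k l)
          (by positivity)
    _ = 1 / n + collision P := by
        simp only [sum_add_distrib, sum_ite_eq, mem_univ, ↓reduceIte, sum_const, card_univ,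
          Fintype.card_fin, nsmul_eq_mul, mul_one, one_div]
        field_simp

end Empirical

section Witnesses

variable {A B : Type*} [Fintype A] [Fintype B]

variable (A) in
noncomputable def uniformPmf : A → ℝ := fun _ => (Fintype.card A : ℝ)⁻¹

variable (A) in
noncomputable def diagPmf [DecidableEq A] : A × A → ℝ :=
  fun p => if p.1 = p.2 then (Fintype.card A : ℝ)⁻¹ else 0

lemma isPmf_uniformPmf [Nonempty A] : IsPmf (uniformPmf A) :=
  ⟨fun _ => by simp [uniformPmf], by simp [uniformPmf]⟩

lemma entropy_uniformPmf [Nonempty A] : entropy (uniformPmf A) = log (Fintype.card A) := by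
  simp [entropy, uniformPmf, log_inv]

lemma collision_uniformPmf [Nonempty A] : collision (uniformPmf A) = (Fintype.card A : ℝ)⁻¹ := by
  simp [collision, uniformPmf, sq]

lemma sum_uniformPmf_prod_fst [Nonempty B] (a : A) :
    ∑ b, uniformPmf (A × B) (a, b) = uniformPmf A a := by
  simp [uniformPmf]

lemma sum_uniformPmf_prod_snd [Nonempty A] (b : B) :
    ∑ a, uniformPmf (A × B) (a, b) = uniformPmf B b := by
  simp [uniformPmf, mul_comm (Fintype.card B : ℝ)⁻¹]

lemma mutualInfo_uniformPmf [Nonempty A] [Nonempty B] : mutualInfo (uniformPmf (A × B)) = 0 := by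
  simp only [mutualInfo, sum_uniformPmf_prod_fst, sum_uniformPmf_prod_snd, entropy_uniformPmf,
    Fintype.card_prod, Nat.cast_mul]
  rw [log_mul (by positivity) (by positivity)]
  ring

variable [DecidableEq A]

lemma sum_diagPmf_fst (a : A) : ∑ b, diagPmf A (a, b) = uniformPmf A a := by
  simp [diagPmf, uniformPmf]

lemma sum_diagPmf_snd (b : A) : ∑ a, diagPmf A (a, b) = uniformPmf A b := by
  simp [diagPmf, uniformPmf]

lemma isPmf_diagPmf [Nonempty A] : IsPmf (diagPmf A) := by
  refine ⟨fun p => by unfold diagPmf; positivity, ?_⟩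
  rw [Fintype.sum_prod_type, sum_congr rfl fun a _ => sum_diagPmf_fst a, isPmf_uniformPmf.2]

lemma entropy_diagPmf [Nonempty A] : entropy (diagPmf A) = log (Fintype.card A) := by
  simp [entropy, diagPmf, Fintype.sum_prod_type, apply_ite, log_inv]

lemma mutualInfo_diagPmf [Nonempty A] : mutualInfo (diagPmf A) = log (Fintype.card A) := by
  simp only [mutualInfo, sum_diagPmf_fst, sum_diagPmf_snd, entropy_uniformPmf, entropy_diagPmf]
  ring

end Witnesses

section Converse

variable {A B : Type*} [Fintype A] [Fintype B] {n : ℕ}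

lemma expectIID_collision_empDist_comp_le [DecidableEq B] {P : A → ℝ} (hP : IsPmf P)
    (hn : n ≠ 0) (v : A → B) :
    expectIID P (fun z : Fin n → A => collision (empDist (v ∘ z)))
      ≤ 1 / n + collision fun b => ∑ a with v a = b, P a := by
  rw [expectIID_comp v fun w => collision (empDist w)]
  exact expectIID_collision_empDist_le (isPmf_map hP v) hn

lemma two_sub_le_expectIID_mutualInfo_empDist [DecidableEq A] [DecidableEq B] [Nonempty A]
    [Nonempty B] (hn : n ≠ 0) :
    2 - √n * (2 / n + (Fintype.card A : ℝ)⁻¹ + (Fintype.card B : ℝ)⁻¹)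
      ≤ expectIID (uniformPmf (A × B)) fun z : Fin n → A × B => mutualInfo (empDist z) := by
  have hP : IsPmf (uniformPmf (A × B)) := isPmf_uniformPmf
  have h₁ := expectIID_collision_empDist_comp_le hP hn Prod.fst
  have h₂ := expectIID_collision_empDist_comp_le hP hn Prod.snd
  simp only [sum_filter_fst_eq, sum_filter_snd_eq, sum_uniformPmf_prod_fst,
    sum_uniformPmf_prod_snd] at h₁ h₂
  rw [collision_uniformPmf] at h₁ h₂
  have hmono := expectIID_mono hP.1
    (f := fun z => 2 + -√n * (collision (empDist (Prod.fst ∘ z))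
      + collision (empDist (Prod.snd ∘ z))))
    (g := fun z => mutualInfo (empDist z))
    fun z => by linarith [two_sub_le_mutualInfo_empDist hn z]
  rw [expectIID_add, expectIID_const hP.2, expectIID_const_mul, expectIID_add] at hmono
  have := mul_le_mul_of_nonneg_left (add_le_add h₁ h₂) (sqrt_nonneg n)
  have e : √n * (2 / n + (Fintype.card A : ℝ)⁻¹ + (Fintype.card B : ℝ)⁻¹)
      = √n * (1 / n + (Fintype.card A : ℝ)⁻¹ + (1 / n + (Fintype.card B : ℝ)⁻¹)) := by ring
  linarith

lemma one_le_expectIID_uniformPmf [DecidableEq A] [DecidableEq B] [Nonempty A] [Nonempty B]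
    (hn : 100 ≤ n) (hA : 100 * n ≤ Fintype.card A ^ 2) (hB : 100 * n ≤ Fintype.card B ^ 2) :
    1 ≤ expectIID (uniformPmf (A × B)) fun z : Fin n → A × B =>
      (mutualInfo (empDist z) - mutualInfo (uniformPmf (A × B))) ^ 2 := by
  have hmean := two_sub_le_expectIID_mutualInfo_empDist (A := A) (B := B) (n := n) (by omega)
  have hsq := two_mul_expectIID_sub_one_le isPmf_uniformPmf
    fun z : Fin n → A × B => mutualInfo (empDist z)
  set s := √n
  have hn' : (n : ℝ) = s ^ 2 := (sq_sqrt (Nat.cast_nonneg n)).symm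
  have hs : 10 ≤ s := by
    have : (100 : ℝ) ≤ n := by exact_mod_cast hn
    nlinarith [sqrt_nonneg (n : ℝ)]
  have hsA : 10 * s ≤ Fintype.card A := by
    have : (100 : ℝ) * n ≤ (Fintype.card A : ℝ) ^ 2 := by exact_mod_cast hA
    nlinarith [Nat.cast_nonneg (α := ℝ) (Fintype.card A)]
  have hsB : 10 * s ≤ Fintype.card B := by
    have : (100 : ℝ) * n ≤ (Fintype.card B : ℝ) ^ 2 := by exact_mod_cast hB
    nlinarith [Nat.cast_nonneg (α := ℝ) (Fintype.card B)]
  have e₀ : s * (2 / n) ≤ 1 / 5 := by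
    rw [hn', show s * (2 / s ^ 2) = 2 / s by field_simp, div_le_iff₀ (by positivity)]
    linarith
  have e₁ : s * (Fintype.card A : ℝ)⁻¹ ≤ 1 / 10 := by
    rw [← div_eq_mul_inv, div_le_iff₀ (by positivity)]
    linarith
  have e₂ : s * (Fintype.card B : ℝ)⁻¹ ≤ 1 / 10 := by
    rw [← div_eq_mul_inv, div_le_iff₀ (by positivity)]
    linarith
  simp only [mutualInfo_uniformPmf, sub_zero]
  linarith

lemma one_le_expectIID_diagPmf [DecidableEq A] [Nonempty A] (hn : n ≠ 0)
    (h : 10 * n ≤ Fintype.card A) :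
    1 ≤ expectIID (diagPmf A) fun z : Fin n → A × A =>
      (mutualInfo (empDist z) - mutualInfo (diagPmf A)) ^ 2 := by
  refine le_expectIID_of_forall_le isPmf_diagPmf fun z => ?_
  have hn₀ : (0 : ℝ) < n := Nat.cast_pos.2 (Nat.pos_of_ne_zero hn)
  have hlog : log n + 1 ≤ log (Fintype.card A) := calc
    log n + 1 ≤ log 10 + log n := by
      have : exp 1 ≤ 10 := by linarith [exp_one_lt_d9]
      linarith [(le_log_iff_exp_le (by norm_num : (0 : ℝ) < 10)).2 this]
    _ = log (10 * n) := (log_mul (by norm_num : (10 : ℝ) ≠ 0) hn₀.ne').symm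
    _ ≤ log (Fintype.card A) := log_le_log (by positivity) (by exact_mod_cast h)
  rw [mutualInfo_diagPmf]
  nlinarith [mutualInfo_empDist_le_log hn z]

lemma bddAbove_range_expectIID_sq_sub [DecidableEq A] [DecidableEq B] (hn : n ≠ 0) :
    BddAbove (Set.range fun P : {P : A × B → ℝ // IsPmf P} =>
      expectIID P.1 fun z : Fin n → A × B => (mutualInfo (empDist z) - mutualInfo P.1) ^ 2) := by
  set K : ℝ := Fintype.card A + Fintype.card B + Fintype.card (A × B)
  refine ⟨(2 * K) ^ 2, ?_⟩
  rintro _ ⟨P, rfl⟩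
  refine expectIID_le_of_forall_le P.2 fun z => ?_
  have h₁ := abs_mutualInfo_le (isPmf_empDist hn z)
  have h₂ := abs_mutualInfo_le P.2
  rw [← sq_abs]
  exact pow_le_pow_left₀ (abs_nonneg _) ((abs_sub _ _).trans (by linarith)) 2

end Converse

/-- Plug-in converse: there exist `c > 0`, `ε₀ > 0` and `S₀` such that for all `S ≥ S₀` and
all sample sizes `n ≥ 1` with `n ≤ c S²`, the empirical (plug-in) mutual information
`I(P̂_n)` has worst-case mean squared error at least `ε₀` over all joint pmfs on
`[S] × [S]`; i.e. the worst-case sample complexity required for the empirical mutual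
information to be consistent is `Ω(S²)`. -/
theorem empirical_mutualInfo_converse :
    ∃ c > (0 : ℝ), ∃ ε₀ > (0 : ℝ), ∃ S₀ : ℕ, ∀ S n : ℕ, S₀ ≤ S → 1 ≤ n →
      (n : ℝ) ≤ c * (S : ℝ) ^ 2 →
      ε₀ ≤ ⨆ P : {P : Fin S × Fin S → ℝ // IsPmf P},
        expectIID P.1
          (fun z : Fin n → Fin S × Fin S =>
            (mutualInfo (empDist z) - mutualInfo P.1) ^ 2) := by
  refine ⟨1 / 100, by norm_num, 1, one_pos, 1000, fun S n hS hn hnS => ?_⟩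
  have : Nonempty (Fin S) := ⟨⟨0, by omega⟩⟩
  have hbdd := bddAbove_range_expectIID_sq_sub (A := Fin S) (B := Fin S) (n := n) (by omega)
  rcases le_or_gt (10 * n) S with hsmall | hlarge
  · exact (one_le_expectIID_diagPmf (by omega) (by simpa using hsmall)).trans
      (le_ciSup hbdd ⟨diagPmf (Fin S), isPmf_diagPmf⟩)
  · have hS2 : 100 * n ≤ S ^ 2 := by exact_mod_cast (by linarith : (100 * n : ℝ) ≤ S ^ 2)
    exact (one_le_expectIID_uniformPmf (by omega) (by simpa using hS2) (by simpa using hS2)).trans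
      (le_ciSup hbdd ⟨uniformPmf (Fin S × Fin S), isPmf_uniformPmf⟩)
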